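/- Suppose a queue satisfies: (i) whenever Q(t) ≤ H(t) the update is Q(t+1) = Q(t) + R(t) with R(t) ≤ A_max, and whenever Q(t) > H(t) then Q(t+1) ≤ Q(t) (no admission); (ii) H(t) ≤ B + A_max for all t, where B := Vαφ; and (iii) Q(0) = 0. Then Q(t) ≤ B + 2·A_max for all t ≥ 0. -/

import Mathlib

/-!
Whatever the queue does, `Q (t + 1) ≤ max (Q t) (H t + Amax)`: either nothing is admitted, or
arrivals of at most `Amax` are admitted on top of a backlog that is still below the threshold `H t`.
With `H t ≤ B + Amax` this is `Q (t + 1) ≤ max (Q t) (B + 2 Amax)`, and the bound propagates from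
`Q 0 = 0` by induction.
-/

theorem threshold_step_le_max {α : Type*} [AddCommMonoid α] [LinearOrder α] [IsOrderedAddMonoid α]
    {q q' h r a : α} (hadmit : q ≤ h → q' = q + r) (hr : r ≤ a) (hdeny : h < q → q' ≤ q) :
    q' ≤ max q (h + a) := by
  rcases le_or_gt q h with hq | hq
  · exact (hadmit hq ▸ add_le_add hq hr).trans (le_max_right _ _)
  · exact (hdeny hq).trans (le_max_left _ _)

theorem le_of_forall_succ_le_max {α : Type*} [LinearOrder α] {f : ℕ → α} {c : α}
    (h0 : f 0 ≤ c) (hstep : ∀ t, f (t + 1) ≤ max (f t) c) : ∀ t, f t ≤ c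
  | 0 => h0
  | t + 1 => (hstep t).trans (max_le (le_of_forall_succ_le_max h0 hstep t) le_rfl)

theorem stmt_7 (Q H R : ℕ → ℝ) (Amax B : ℝ)
    (hB : 0 ≤ B) (hAmax : 0 ≤ Amax)
    (hadmit : ∀ t, Q t ≤ H t → Q (t + 1) = Q t + R t)
    (hRle : ∀ t, R t ≤ Amax)
    (hdeny : ∀ t, Q t > H t → Q (t + 1) ≤ Q t)
    (hH : ∀ t, H t ≤ B + Amax)
    (h0 : Q 0 = 0) :
    ∀ t, Q t ≤ B + 2 * Amax := by
  have hstep (t : ℕ) : Q (t + 1) ≤ max (Q t) (B + 2 * Amax) :=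
    (threshold_step_le_max (hadmit t) (hRle t) (hdeny t)).trans
      (max_le_max le_rfl (by linarith [hH t]))
  exact le_of_forall_succ_le_max (by rw [h0]; positivity) hstep
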